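/- arXiv:2101.11151 — 9 statements merged into one kernel-verified Lean document; each statement's English description precedes it below -/
import Mathlib

section
/- If N is a graded 2-absorbing coprimary R-submodule of a graded R-module M and K is a graded R-submodule of M with N not contained in K, then (K :_R N) = {r ∈ R : rN ⊆ K} is a graded 2-absorbing primary ideal of R. -/
open DirectSum Pointwise

variable {G : Type} [AddGroup G] [DecidableEq G]
variable {R : Type} [CommRing R] (𝒜 : G → AddSubgroup R) [GradedRing 𝒜]
variable {M : Type} [AddCommGroup M] [Module R M] (ℳ : G → AddSubgroup M)
  [SetLike.GradedSMul 𝒜 ℳ] [DirectSum.Decomposition ℳ]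

/-- A submodule is graded if it contains every homogeneous component of each of
its elements. -/
def IsGradedSubmodule (N : Submodule R M) : Prop :=
  ∀ (g : G) (m : M), m ∈ N → (DirectSum.decompose ℳ m g : M) ∈ N

/-- The graded radical of an ideal: all `r` such that for each `g` some positive
power of the degree-`g` component of `r` lies in `P`. -/
def gradRad (P : Ideal R) : Set R :=
  {r : R | ∀ g : G, ∃ n : ℕ, 0 < n ∧ ((DirectSum.decompose 𝒜 r g : R)) ^ n ∈ P}

/-- Graded 2-absorbing coprimary submodule. -/
def IsGr2AbsCoprimary (N : Submodule R M) : Prop :=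
  N ≠ ⊥ ∧ IsGradedSubmodule ℳ N ∧
  ∀ x y : R, (∃ g, x ∈ 𝒜 g) → (∃ g, y ∈ 𝒜 g) →
    ∀ K : Submodule R M, IsGradedSubmodule ℳ K →
      (∀ m ∈ N, (x * y) • m ∈ K) →
      x ∈ gradRad 𝒜 (K.colon N) ∨ y ∈ gradRad 𝒜 (K.colon N) ∨ x * y ∈ N.annihilator

/-- Graded 2-absorbing primary ideal. -/
def IsGr2AbsPrimaryIdeal (P : Ideal R) : Prop :=
  P ≠ ⊤ ∧ (∀ (g : G) (r : R), r ∈ P → (DirectSum.decompose 𝒜 r g : R) ∈ P) ∧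
  ∀ a b c : R, (∃ g, a ∈ 𝒜 g) → (∃ g, b ∈ 𝒜 g) → (∃ g, c ∈ 𝒜 g) →
    a * b * c ∈ P → a * b ∈ P ∨ a * c ∈ gradRad 𝒜 P ∨ b * c ∈ gradRad 𝒜 P

open Classical in
/-- Component of `c • m` when `c` is homogeneous. -/
lemma aux_smul_homog_left {c : R} {i : G} (hc : c ∈ 𝒜 i) (m : M) (h : G) :
    (DirectSum.decompose ℳ (c • m) (i + h) : M) = c • (DirectSum.decompose ℳ m h : M) := by
  conv_lhs => rw [← DirectSum.sum_support_decompose ℳ m]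
  rw [Finset.smul_sum, DirectSum.decompose_sum]
  rw [DFinsupp.finset_sum_apply, AddSubmonoidClass.coe_finset_sum]
  rw [Finset.sum_eq_single h]
  · exact DirectSum.decompose_of_mem_same ℳ
      (SetLike.GradedSMul.smul_mem hc (DirectSum.decompose ℳ m h).2)
  · intro j _ hj
    exact DirectSum.decompose_of_mem_ne ℳ
      (SetLike.GradedSMul.smul_mem hc (DirectSum.decompose ℳ m j).2)
      (fun hij => hj (by
        have : i + j = i + h := hij
        exact add_left_cancel this))
  · intro hh
    rw [DFinsupp.notMem_support_iff.mp hh]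
    simp

open Classical in
/-- Component of `r • m` when `m` is homogeneous. -/
lemma aux_smul_homog_right {m : M} {h : G} (hm : m ∈ ℳ h) (r : R) (g : G) :
    (DirectSum.decompose ℳ (r • m) (g + h) : M) = (DirectSum.decompose 𝒜 r g : R) • m := by
  conv_lhs => rw [← DirectSum.sum_support_decompose 𝒜 r]
  rw [Finset.sum_smul, DirectSum.decompose_sum]
  rw [DFinsupp.finset_sum_apply, AddSubmonoidClass.coe_finset_sum]
  rw [Finset.sum_eq_single g]
  · exact DirectSum.decompose_of_mem_same ℳ
      (SetLike.GradedSMul.smul_mem (DirectSum.decompose 𝒜 r g).2 hm)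
  · intro j _ hj
    exact DirectSum.decompose_of_mem_ne ℳ
      (SetLike.GradedSMul.smul_mem (DirectSum.decompose 𝒜 r j).2 hm)
      (fun hij => hj (by
        have : j + h = g + h := hij
        exact add_right_cancel this))
  · intro hh
    rw [DFinsupp.notMem_support_iff.mp hh]
    simp

open Classical in
lemma aux_colon_graded {N K : Submodule R M} (hNg : IsGradedSubmodule ℳ N)
    (hKg : IsGradedSubmodule ℳ K) (g : G) (r : R) (hr : r ∈ K.colon N) :
    (DirectSum.decompose 𝒜 r g : R) ∈ K.colon N := by
  rw [Submodule.mem_colon]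
  intro m hm
  -- decompose m into homogeneous components
  rw [← DirectSum.sum_support_decompose ℳ m, Finset.smul_sum]
  refine Submodule.sum_mem K (fun h _ => ?_)
  have hmh : (DirectSum.decompose ℳ m h : M) ∈ N := hNg h m hm
  have := aux_smul_homog_right 𝒜 ℳ (DirectSum.decompose ℳ m h).2 r g
  rw [← this]
  exact hKg _ _ (Submodule.mem_colon.mp hr _ hmh)

lemma aux_homog_pow_mem_gradRad {x : R} {i : G} (hx : x ∈ 𝒜 i) {P : Ideal R}
    {n : ℕ} (hn : 0 < n) (hxn : x ^ n ∈ P) : x ∈ gradRad 𝒜 P := by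
  intro g
  by_cases hg : g = i
  · subst hg
    exact ⟨n, hn, by rwa [DirectSum.decompose_of_mem_same 𝒜 hx]⟩
  · exact ⟨1, one_pos, by
      rw [DirectSum.decompose_of_mem_ne 𝒜 hx (Ne.symm hg)]
      simpa using P.zero_mem⟩

theorem stmt_0 (N K : Submodule R M) (hN : IsGr2AbsCoprimary 𝒜 ℳ N)
    (hK : IsGradedSubmodule ℳ K) (hNK : ¬ N ≤ K) :
    IsGr2AbsPrimaryIdeal 𝒜 (K.colon N) := by
  obtain ⟨-, hNg, hN2⟩ := hN
  refine ⟨?_, fun g r hr => aux_colon_graded 𝒜 ℳ hNg hK g r hr, ?_⟩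
  · intro htop
    apply hNK
    intro m hm
    have : (1 : R) ∈ K.colon N := htop ▸ Submodule.mem_top
    simpa using Submodule.mem_colon.mp this m hm
  · rintro a b c ⟨ga, ha⟩ ⟨gb, hb⟩ ⟨gc, hc⟩ habc
    -- K' = preimage of K under multiplication by c
    set K' : Submodule R M := K.comap (LinearMap.lsmul R M c) with hK'def
    have hK'mem : ∀ m : M, m ∈ K' ↔ c • m ∈ K := fun m => Iff.rfl
    have hK'g : IsGradedSubmodule ℳ K' := by
      intro g m hm
      rw [hK'mem]
      rw [← aux_smul_homog_left 𝒜 ℳ hc m g]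
      exact hK _ _ ((hK'mem m).mp hm)
    have habK' : ∀ m ∈ N, (a * b) • m ∈ K' := by
      intro m hm
      rw [hK'mem, ← mul_smul]
      have : c * (a * b) = a * b * c := by ring
      rw [this]
      exact Submodule.mem_colon.mp habc m hm
    -- key: a^n ∈ K'.colon N → (a*c)^n ∈ K.colon N
    have key : ∀ x : R, ∀ n : ℕ, 0 < n → x ^ n ∈ K'.colon N → (x * c) ^ n ∈ K.colon N := by
      intro x n hn hxn
      rw [Submodule.mem_colon]
      intro m hm
      have h1 : c • (x ^ n • m) ∈ K := Submodule.mem_colon.mp hxn m hm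
      have : (x * c) ^ n • m = c ^ (n - 1) • (c • (x ^ n • m)) := by
        rw [← mul_smul, ← mul_smul]
        congr 1
        rw [mul_pow, show c ^ (n-1) * c * x ^ n = x ^ n * (c ^ (n-1) * c) by ring,
          ← pow_succ, Nat.sub_add_cancel hn]
      rw [this]
      exact K.smul_mem _ h1
    rcases hN2 a b ⟨ga, ha⟩ ⟨gb, hb⟩ K' hK'g habK' with h | h | h
    · right; left
      obtain ⟨n, hn, hpow⟩ := h ga
      rw [DirectSum.decompose_of_mem_same 𝒜 ha] at hpow
      exact aux_homog_pow_mem_gradRad 𝒜 (SetLike.mul_mem_graded ha hc) hn (key a n hn hpow)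
    · right; right
      obtain ⟨n, hn, hpow⟩ := h gb
      rw [DirectSum.decompose_of_mem_same 𝒜 hb] at hpow
      exact aux_homog_pow_mem_gradRad 𝒜 (SetLike.mul_mem_graded hb hc) hn (key b n hn hpow)
    · left
      rw [Submodule.mem_colon]
      intro m hm
      rw [Submodule.mem_annihilator] at h
      rw [h m hm]
      exact K.zero_mem
end

section
/- If N is a graded 2-absorbing coprimary R-submodule of a graded R-module M, then Ann_R(N) is a graded 2-absorbing primary ideal of R. -/
open DirectSum Pointwise

variable {G : Type} [AddGroup G] [DecidableEq G]
variable {R : Type} [CommRing R] (𝒜 : G → AddSubgroup R) [GradedRing 𝒜]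
variable {M : Type} [AddCommGroup M] [Module R M] (ℳ : G → AddSubgroup M)
  [SetLike.GradedSMul 𝒜 ℳ] [DirectSum.Decomposition ℳ]

/-
`Ann(N)` is proper because `N ≠ 0`, and graded because `N` is. For homogeneous `a, b, c` with
`abc • N = 0`, apply the coprimary condition to `a, b` and the graded submodule
`K = {m | c • m = 0}`, which contains `ab • N`. If `aⁿ • N ⊆ K` then `(ac)ⁿ = cⁿ⁻¹ (c aⁿ)`
kills `N`, so `ac` lies in the graded radical of `Ann(N)`; likewise for `b`.
-/

lemma coe_decompose_smul_add_of_right_mem (r : R) {h : G} {x : M} (hx : x ∈ ℳ h) (g : G) :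
    (decompose ℳ (r • x) (g + h) : M) = (decompose 𝒜 r g : R) • x := by
  induction r using DirectSum.Decomposition.inductionOn 𝒜 with
  | zero => simp
  | @homogeneous i r =>
    obtain ⟨r, hri⟩ := r
    have hrx : r • x ∈ ℳ (i + h) := SetLike.GradedSMul.smul_mem hri hx
    by_cases hgi : g = i
    · subst hgi
      rw [decompose_of_mem_same ℳ hrx, decompose_of_mem_same 𝒜 hri]
    · rw [decompose_of_mem_ne ℳ hrx (fun h' => hgi (add_right_cancel h').symm),
        decompose_of_mem_ne 𝒜 hri (Ne.symm hgi), zero_smul]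
  | add r s hr hs =>
    simp only [add_smul, decompose_add, DirectSum.add_apply, AddSubgroup.coe_add, hr, hs]

omit [GradedRing 𝒜] in
lemma coe_decompose_smul_add_of_left_mem {c : R} {i : G} (hc : c ∈ 𝒜 i) (m : M) (h : G) :
    (decompose ℳ (c • m) (i + h) : M) = c • (decompose ℳ m h : M) := by
  induction m using DirectSum.Decomposition.inductionOn ℳ with
  | zero => simp
  | @homogeneous j m =>
    obtain ⟨m, hmj⟩ := m
    have hcm : c • m ∈ ℳ (i + j) := SetLike.GradedSMul.smul_mem hc hmj
    by_cases hhj : h = j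
    · subst hhj
      rw [decompose_of_mem_same ℳ hcm, decompose_of_mem_same ℳ hmj]
    · rw [decompose_of_mem_ne ℳ hcm (fun h' => hhj (add_left_cancel h').symm),
        decompose_of_mem_ne ℳ hmj (Ne.symm hhj), smul_zero]
  | add m n hm hn =>
    simp only [smul_add, decompose_add, DirectSum.add_apply, AddSubgroup.coe_add, hm, hn]

lemma IsGradedSubmodule.decompose_mem_annihilator {N : Submodule R M}
    (hN : IsGradedSubmodule ℳ N) {r : R} (hr : r ∈ N.annihilator) (g : G) :
    (decompose 𝒜 r g : R) ∈ N.annihilator := by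
  classical
  rw [Submodule.mem_annihilator] at hr ⊢
  intro m hm
  rw [← sum_support_decompose ℳ m, Finset.smul_sum]
  refine Finset.sum_eq_zero fun h _ => ?_
  rw [← coe_decompose_smul_add_of_right_mem 𝒜 ℳ r (decompose ℳ m h).2 g, hr _ (hN h m hm)]
  simp

omit [GradedRing 𝒜] in
lemma isGradedSubmodule_torsionBy {c : R} {i : G} (hc : c ∈ 𝒜 i) :
    IsGradedSubmodule ℳ (Submodule.torsionBy R M c) := by
  intro g m hm
  rw [Submodule.mem_torsionBy_iff] at hm ⊢
  rw [← coe_decompose_smul_add_of_left_mem 𝒜 ℳ hc m g, hm]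
  simp

lemma mem_gradRad_of_pow_mem {P : Ideal R} {w : R} {i : G} (hw : w ∈ 𝒜 i) {n : ℕ}
    (hn : 0 < n) (hwn : w ^ n ∈ P) : w ∈ gradRad 𝒜 P := by
  intro g
  by_cases hg : g = i
  · subst hg
    exact ⟨n, hn, by rwa [decompose_of_mem_same 𝒜 hw]⟩
  · exact ⟨1, one_pos, by simp [decompose_of_mem_ne 𝒜 hw (Ne.symm hg)]⟩

lemma exists_pow_mem_of_mem_gradRad {P : Ideal R} {w : R} {i : G} (hw : w ∈ 𝒜 i)
    (h : w ∈ gradRad 𝒜 P) : ∃ n, 0 < n ∧ w ^ n ∈ P := by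
  simpa only [decompose_of_mem_same 𝒜 hw] using h i

lemma mul_pow_mem_annihilator_of_pow_mem_colon_torsionBy {N : Submodule R M} {a c : R} {n : ℕ}
    (hn : n ≠ 0) (h : a ^ n ∈ (Submodule.torsionBy R M c).colon N) :
    (a * c) ^ n ∈ N.annihilator := by
  have hcan : c * a ^ n ∈ N.annihilator := Submodule.mem_annihilator.mpr fun m hm => by
    rw [mul_smul, ← Submodule.mem_torsionBy_iff]
    exact Submodule.mem_colon.mp h m hm
  obtain ⟨k, rfl⟩ := Nat.exists_eq_succ_of_ne_zero hn
  rw [show (a * c) ^ (k + 1) = c ^ k * (c * a ^ (k + 1)) by ring]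
  exact Ideal.mul_mem_left _ _ hcan

lemma mul_mem_gradRad_annihilator_of_mem_gradRad_colon_torsionBy {N : Submodule R M}
    {a c : R} {i j : G} (ha : a ∈ 𝒜 i) (hc : c ∈ 𝒜 j)
    (h : a ∈ gradRad 𝒜 ((Submodule.torsionBy R M c).colon N)) :
    a * c ∈ gradRad 𝒜 N.annihilator := by
  obtain ⟨n, hn, han⟩ := exists_pow_mem_of_mem_gradRad 𝒜 ha h
  exact mem_gradRad_of_pow_mem 𝒜 (SetLike.mul_mem_graded ha hc) hn
    (mul_pow_mem_annihilator_of_pow_mem_colon_torsionBy hn.ne' han)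

theorem stmt_1 (N : Submodule R M) (hN : IsGr2AbsCoprimary 𝒜 ℳ N) :
    IsGr2AbsPrimaryIdeal 𝒜 N.annihilator := by
  obtain ⟨hN₀, hNg, hN⟩ := hN
  refine ⟨Submodule.annihilator_eq_top_iff.not.mpr hN₀,
    fun g r hr => hNg.decompose_mem_annihilator 𝒜 ℳ hr g, ?_⟩
  rintro a b c ⟨i, ha⟩ ⟨j, hb⟩ ⟨k, hc⟩ habc
  have habK : ∀ m ∈ N, (a * b) • m ∈ Submodule.torsionBy R M c := fun m hm => by
    rw [Submodule.mem_torsionBy_iff, smul_smul, mul_comm]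
    exact Submodule.mem_annihilator.mp habc m hm
  rcases hN a b ⟨i, ha⟩ ⟨j, hb⟩ _ (isGradedSubmodule_torsionBy 𝒜 ℳ hc) habK with
    hac | hbc | hab
  · exact .inr <| .inl <| mul_mem_gradRad_annihilator_of_mem_gradRad_colon_torsionBy 𝒜 ha hc hac
  · exact .inr <| .inr <| mul_mem_gradRad_annihilator_of_mem_gradRad_colon_torsionBy 𝒜 hb hc hbc
  · exact .inl hab
end

section
/- If N is a graded 2-absorbing coprimary R-submodule of a graded R-module M, then Grad(Ann_R(N)) is a graded 2-absorbing ideal of R. -/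
/-!
The graded radical of `Ann N` is the homogeneous core of the radical of `Ann N`, so it is a
homogeneous ideal, proper because `N ≠ 0`. If homogeneous `a, b, c` satisfy `(abc)^m N = 0`, then
`a^m b^m N` lies in the graded submodule `K = ker (c^m • ·)`. Applying the coprimary condition to
`a^m, b^m` and `K` gives `c^m a^(mk) N = 0`, `c^m b^(mk) N = 0` or `(ab)^m N = 0`, that is,
`ac`, `bc` or `ab` lies in the radical of `Ann N`.
-/

open DirectSum Pointwise

variable {G : Type} [AddGroup G] [DecidableEq G]
variable {R : Type} [CommRing R] (𝒜 : G → AddSubgroup R) [GradedRing 𝒜]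
variable {M : Type} [AddCommGroup M] [Module R M] (ℳ : G → AddSubgroup M)
  [SetLike.GradedSMul 𝒜 ℳ] [DirectSum.Decomposition ℳ]

theorem Ideal.mem_homogeneousCore_iff {ι σ A : Type*} [Semiring A] [SetLike σ A]
    [AddSubmonoidClass σ A] (𝒜 : ι → σ) [DecidableEq ι] [AddMonoid ι] [GradedRing 𝒜]
    (I : Ideal A) (x : A) :
    x ∈ (I.homogeneousCore 𝒜).toIdeal ↔ ∀ i, (DirectSum.decompose 𝒜 x i : A) ∈ I := by
  classical
  refine ⟨fun hx i ↦ I.toIdeal_homogeneousCore_le 𝒜 ((I.homogeneousCore 𝒜).isHomogeneous i hx),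
    fun hx ↦ ?_⟩
  rw [← DirectSum.sum_support_decompose 𝒜 x]
  exact Ideal.sum_mem _ fun i _ ↦
    Ideal.mem_homogeneousCore_of_homogeneous_of_mem (SetLike.isHomogeneousElem_coe _) (hx i)

theorem Ideal.mem_homogeneousCore_iff_of_mem_graded {ι σ A : Type*} [Semiring A] [SetLike σ A]
    [AddSubmonoidClass σ A] {𝒜 : ι → σ} [DecidableEq ι] [AddMonoid ι] [GradedRing 𝒜]
    {I : Ideal A} {x : A} {i : ι} (hx : x ∈ 𝒜 i) :
    x ∈ (I.homogeneousCore 𝒜).toIdeal ↔ x ∈ I :=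
  ⟨fun h ↦ I.toIdeal_homogeneousCore_le 𝒜 h,
    Ideal.mem_homogeneousCore_of_homogeneous_of_mem ⟨i, hx⟩⟩

theorem Ideal.mul_mem_radical_of_pow_mul_pow_mem {A : Type*} [CommSemiring A] {I : Ideal A}
    {a c : A} {i j : ℕ} (h : c ^ i * a ^ j ∈ I) : a * c ∈ I.radical :=
  ⟨i + j, by
    rw [show (a * c) ^ (i + j) = c ^ i * a ^ j * (a ^ i * c ^ j) by ring]
    exact I.mul_mem_right _ h⟩

theorem Submodule.mem_colon_ker_lsmul_iff {A M : Type*} [CommSemiring A] [AddCommMonoid M]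
    [Module A M] (N : Submodule A M) (c x : A) :
    x ∈ (LinearMap.ker (LinearMap.lsmul A M c)).colon N ↔ c * x ∈ N.annihilator := by
  simp only [Submodule.mem_colon, LinearMap.mem_ker, LinearMap.lsmul_apply,
    Submodule.mem_annihilator, SetLike.mem_coe, mul_smul]

theorem Submodule.radical_annihilator_ne_top {A M : Type*} [CommSemiring A] [AddCommMonoid M]
    [Module A M] {N : Submodule A M} (hN : N ≠ ⊥) : N.annihilator.radical ≠ ⊤ := by
  rwa [Ne, Ideal.radical_eq_top, Submodule.annihilator_eq_top_iff]

theorem gradRad_eq_homogeneousCore_radical (P : Ideal R) :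
    gradRad 𝒜 P = (P.radical.homogeneousCore 𝒜).toIdeal := by
  ext r
  rw [SetLike.mem_coe, Ideal.mem_homogeneousCore_iff]
  refine forall_congr' fun g ↦ ⟨fun ⟨n, _, hn⟩ ↦ ⟨n, hn⟩, fun ⟨n, hn⟩ ↦ ⟨n + 1, n.succ_pos, ?_⟩⟩
  rw [pow_succ]
  exact P.mul_mem_right _ hn

theorem mem_gradRad_iff_of_mem_graded {P : Ideal R} {x : R} {i : G} (hx : x ∈ 𝒜 i) :
    x ∈ gradRad 𝒜 P ↔ x ∈ P.radical := by
  rw [gradRad_eq_homogeneousCore_radical, SetLike.mem_coe,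
    Ideal.mem_homogeneousCore_iff_of_mem_graded hx]

theorem DirectSum.coe_decompose_smul_of_mem {ι σA σM A M : Type*} [DecidableEq ι] [AddMonoid ι]
    [IsLeftCancelAdd ι] [Semiring A] [AddCommMonoid M] [Module A M] [SetLike σA A] [SetLike σM M]
    [AddSubmonoidClass σM M] {𝒜 : ι → σA} (ℳ : ι → σM) [DirectSum.Decomposition ℳ]
    [SetLike.GradedSMul 𝒜 ℳ] {a : A} {i : ι} (ha : a ∈ 𝒜 i) (x : M) (j : ι) :
    (DirectSum.decompose ℳ (a • x) (i + j) : M) = a • (DirectSum.decompose ℳ x j : M) := by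
  induction x using DirectSum.Decomposition.inductionOn ℳ with
  | zero => simp
  | @homogeneous k y =>
    have hay : a • (y : M) ∈ ℳ (i + k) := SetLike.GradedSMul.smul_mem ha y.2
    by_cases hjk : k = j
    · subst hjk
      rw [DirectSum.decompose_of_mem_same ℳ hay, DirectSum.decompose_of_mem_same ℳ y.2]
    · rw [DirectSum.decompose_of_mem_ne ℳ hay (by simpa using hjk),
        DirectSum.decompose_of_mem_ne ℳ y.2 hjk, smul_zero]
  | add x x' hx hx' =>
    rw [smul_add, DirectSum.decompose_add, DirectSum.add_apply, AddMemClass.coe_add, hx, hx',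
      DirectSum.decompose_add, DirectSum.add_apply, AddMemClass.coe_add, smul_add]

theorem isGradedSubmodule_ker_lsmul {G R M : Type} [AddGroup G] [DecidableEq G] [CommRing R]
    [AddCommGroup M] [Module R M] {𝒜 : G → AddSubgroup R} (ℳ : G → AddSubgroup M)
    [DirectSum.Decomposition ℳ] [SetLike.GradedSMul 𝒜 ℳ] {c : R} {i : G} (hc : c ∈ 𝒜 i) :
    IsGradedSubmodule ℳ (LinearMap.ker (LinearMap.lsmul R M c)) := by
  intro j x hx
  rw [LinearMap.mem_ker, LinearMap.lsmul_apply] at hx ⊢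
  rw [← DirectSum.coe_decompose_smul_of_mem ℳ hc, hx, DirectSum.decompose_zero,
    DirectSum.zero_apply, ZeroMemClass.coe_zero]

theorem mul_mem_radical_annihilator_of_pow_mem_gradRad_colon {N : Submodule R M} {x c : R}
    {i : G} {m : ℕ} (hx : x ∈ 𝒜 i)
    (h : x ^ m ∈ gradRad 𝒜 ((LinearMap.ker (LinearMap.lsmul R M (c ^ m))).colon N)) :
    x * c ∈ N.annihilator.radical := by
  obtain ⟨n, hn⟩ := (mem_gradRad_iff_of_mem_graded 𝒜 (SetLike.pow_mem_graded m hx)).mp h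
  rw [Submodule.mem_colon_ker_lsmul_iff, ← pow_mul] at hn
  exact Ideal.mul_mem_radical_of_pow_mul_pow_mem hn

theorem IsGr2AbsCoprimary.mul_mem_radical_annihilator {N : Submodule R M}
    (hN : IsGr2AbsCoprimary 𝒜 ℳ N) {a b c : R} {i j k : G} (ha : a ∈ 𝒜 i) (hb : b ∈ 𝒜 j)
    (hc : c ∈ 𝒜 k) (habc : a * b * c ∈ N.annihilator.radical) :
    a * b ∈ N.annihilator.radical ∨ a * c ∈ N.annihilator.radical ∨
      b * c ∈ N.annihilator.radical := by
  obtain ⟨m, hm⟩ := habc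
  have hmK : ∀ x ∈ N, (a ^ m * b ^ m) • x ∈ LinearMap.ker (LinearMap.lsmul R M (c ^ m)) := by
    intro x hx
    rw [LinearMap.mem_ker, LinearMap.lsmul_apply, smul_smul,
      show c ^ m * (a ^ m * b ^ m) = (a * b * c) ^ m by ring]
    exact Submodule.mem_annihilator.mp hm x hx
  rcases hN.2.2 _ _ ⟨_, SetLike.pow_mem_graded m ha⟩ ⟨_, SetLike.pow_mem_graded m hb⟩ _
    (isGradedSubmodule_ker_lsmul ℳ (SetLike.pow_mem_graded m hc)) hmK with h | h | h
  · exact Or.inr (Or.inl (mul_mem_radical_annihilator_of_pow_mem_gradRad_colon 𝒜 ha h))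
  · exact Or.inr (Or.inr (mul_mem_radical_annihilator_of_pow_mem_gradRad_colon 𝒜 hb h))
  · exact Or.inl ⟨m, by rwa [mul_pow]⟩

theorem stmt_2 (N : Submodule R M) (hN : IsGr2AbsCoprimary 𝒜 ℳ N) :
    ∃ Q : Ideal R, (Q : Set R) = gradRad 𝒜 N.annihilator ∧ Q ≠ ⊤ ∧
      (∀ (g : G) (r : R), r ∈ Q → (DirectSum.decompose 𝒜 r g : R) ∈ Q) ∧
      ∀ a b c : R, (∃ g, a ∈ 𝒜 g) → (∃ g, b ∈ 𝒜 g) → (∃ g, c ∈ 𝒜 g) →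
        a * b * c ∈ Q → a * b ∈ Q ∨ a * c ∈ Q ∨ b * c ∈ Q := by
  refine ⟨(N.annihilator.radical.homogeneousCore 𝒜).toIdeal,
    (gradRad_eq_homogeneousCore_radical 𝒜 _).symm,
    ne_top_of_le_ne_top (Submodule.radical_annihilator_ne_top hN.1)
      (Ideal.toIdeal_homogeneousCore_le 𝒜 _),
    HomogeneousIdeal.isHomogeneous _, ?_⟩
  rintro a b c ⟨i, ha⟩ ⟨j, hb⟩ ⟨k, hc⟩ habc
  simp only [Ideal.mem_homogeneousCore_iff_of_mem_graded (SetLike.mul_mem_graded ha hb),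
    Ideal.mem_homogeneousCore_iff_of_mem_graded (SetLike.mul_mem_graded ha hc),
    Ideal.mem_homogeneousCore_iff_of_mem_graded (SetLike.mul_mem_graded hb hc),
    Ideal.mem_homogeneousCore_iff_of_mem_graded
      (SetLike.mul_mem_graded (SetLike.mul_mem_graded ha hb) hc)] at habc ⊢
  exact hN.mul_mem_radical_annihilator 𝒜 ℳ ha hb hc habc
end

section
/- Let f : M → S be a graded R-homomorphism of graded R-modules. If N is a graded 2-absorbing coprimary R-submodule of M with N not contained in Ker(f), then f(N) is a graded 2-absorbing coprimary R-submodule of S. -/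
open DirectSum Pointwise

variable {G : Type} [AddGroup G] [DecidableEq G]
variable {R : Type} [CommRing R] (𝒜 : G → AddSubgroup R) [GradedRing 𝒜]
variable {M : Type} [AddCommGroup M] [Module R M] (ℳ : G → AddSubgroup M)
  [SetLike.GradedSMul 𝒜 ℳ] [DirectSum.Decomposition ℳ]

lemma decompose_map_aux {M' : Type} [AddCommGroup M'] [Module R M'] (𝒮 : G → AddSubgroup M')
    [SetLike.GradedSMul 𝒜 𝒮] [DirectSum.Decomposition 𝒮]
    (f : M →ₗ[R] M') (hf : ∀ (g : G), ∀ m ∈ ℳ g, f m ∈ 𝒮 g)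
    (m : M) (g : G) :
    (DirectSum.decompose 𝒮 (f m) g : M') = f (DirectSum.decompose ℳ m g : M) := by
  classical
  conv_lhs => rw [← DirectSum.sum_support_decompose ℳ m]
  rw [map_sum]
  have : ∀ i ∈ (DirectSum.decompose ℳ m).support,
      (DirectSum.decompose 𝒮 (f (DirectSum.decompose ℳ m i : M)) g : M')
        = if i = g then f (DirectSum.decompose ℳ m i : M) else 0 := by
    intro i _
    have hi : f (DirectSum.decompose ℳ m i : M) ∈ 𝒮 i :=
      hf i _ (SetLike.coe_mem _)
    by_cases h : i = g
    · subst h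
      simp [DirectSum.decompose_of_mem_same 𝒮 hi]
    · simp [h, DirectSum.decompose_of_mem_ne 𝒮 hi h]
  calc (DirectSum.decompose 𝒮 (∑ i ∈ (DirectSum.decompose ℳ m).support,
          f (DirectSum.decompose ℳ m i : M)) g : M')
      = ∑ i ∈ (DirectSum.decompose ℳ m).support,
          (DirectSum.decompose 𝒮 (f (DirectSum.decompose ℳ m i : M)) g : M') := by
        rw [DirectSum.decompose_sum]
        rw [DFinsupp.finset_sum_apply]
        push_cast
        rfl
    _ = ∑ i ∈ (DirectSum.decompose ℳ m).support,
          (if i = g then f (DirectSum.decompose ℳ m i : M) else 0) :=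
        Finset.sum_congr rfl this
    _ = f (DirectSum.decompose ℳ m g : M) := by
        rw [Finset.sum_ite_eq' _ g]
        by_cases hg : g ∈ (DirectSum.decompose ℳ m).support
        · simp [hg]
        · rw [DFinsupp.notMem_support_iff] at hg
          simp [hg]

theorem stmt_4 {M' : Type} [AddCommGroup M'] [Module R M'] (𝒮 : G → AddSubgroup M')
    [SetLike.GradedSMul 𝒜 𝒮] [DirectSum.Decomposition 𝒮]
    (f : M →ₗ[R] M') (hf : ∀ (g : G), ∀ m ∈ ℳ g, f m ∈ 𝒮 g)
    (N : Submodule R M) (hN : IsGr2AbsCoprimary 𝒜 ℳ N)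
    (hker : ¬ N ≤ LinearMap.ker f) :
    IsGr2AbsCoprimary 𝒜 𝒮 (N.map f) := by
  obtain ⟨hbot, hgr, habs⟩ := hN
  refine ⟨?_, ?_, ?_⟩
  · intro h
    apply hker
    intro n hn
    have : f n ∈ N.map f := Submodule.mem_map_of_mem hn
    rw [h, Submodule.mem_bot] at this
    exact this
  · intro g m hm
    obtain ⟨n, hn, rfl⟩ := hm
    rw [decompose_map_aux 𝒜 ℳ 𝒮 f hf]
    exact Submodule.mem_map_of_mem (hgr g n hn)
  · intro x y hx hy K hK hKN
    set K' : Submodule R M := K.comap f with hK'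
    have hK'gr : IsGradedSubmodule ℳ K' := by
      intro g m hm
      simp only [hK', Submodule.mem_comap] at hm ⊢
      rw [← decompose_map_aux 𝒜 ℳ 𝒮 f hf]
      exact hK g (f m) hm
    have hsub : ∀ m ∈ N, (x * y) • m ∈ K' := by
      intro m hm
      simp only [hK', Submodule.mem_comap, map_smul]
      exact hKN (f m) (Submodule.mem_map_of_mem hm)
    have hcolon : (K'.colon N : Set R) ⊆ (K.colon (N.map f) : Set R) := by
      intro r hr
      rw [SetLike.mem_coe, Submodule.mem_colon] at hr ⊢
      rintro p ⟨n, hn, rfl⟩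
      have := hr n hn
      simp only [hK', Submodule.mem_comap, map_smul] at this
      exact this
    have hrad : gradRad 𝒜 (K'.colon N) ⊆ gradRad 𝒜 (K.colon (N.map f)) := by
      intro r hr g
      obtain ⟨n, hn, hmem⟩ := hr g
      exact ⟨n, hn, hcolon hmem⟩
    rcases habs x y hx hy K' hK'gr hsub with h | h | h
    · exact Or.inl (hrad h)
    · exact Or.inr (Or.inl (hrad h))
    · refine Or.inr (Or.inr ?_)
      rw [Submodule.mem_annihilator] at h ⊢
      rintro p ⟨n, hn, rfl⟩
      rw [← map_smul, h n hn, map_zero]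
end

section
/- A nonzero graded R-submodule N of a graded R-module M is graded 2-absorbing coprimary if and only if for every pair of homogeneous elements x, y of R, either x^n N ⊆ xyN for some positive integer n, or y^m N ⊆ xyN for some positive integer m, or xy ∈ Ann_R(N). -/
open DirectSum Pointwise

variable {G : Type} [AddGroup G] [DecidableEq G]
variable {R : Type} [CommRing R] (𝒜 : G → AddSubgroup R) [GradedRing 𝒜]
variable {M : Type} [AddCommGroup M] [Module R M] (ℳ : G → AddSubgroup M)
  [SetLike.GradedSMul 𝒜 ℳ] [DirectSum.Decomposition ℳ]

/-! For homogeneous `x`, the graded radical condition `x ∈ Grad(K :_R N)` just says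
`x ^ n • N ≤ K` for some `n > 0`. Since `(x * y) • N` is again graded, the defining condition,
quantified over all graded `K ⊇ (x * y) • N`, is equivalent to its instance `K = (x * y) • N`. -/

theorem DirectSum.decompose_smul_of_mem {ι A B σA σB : Type*} [AddGroup ι] [DecidableEq ι]
    [SetLike σA A] [AddCommMonoid B] [DistribSMul A B] [SetLike σB B] [AddSubmonoidClass σB B]
    {𝒮 : ι → σA} (ℬ : ι → σB) [SetLike.GradedSMul 𝒮 ℬ] [DirectSum.Decomposition ℬ]
    {i : ι} {a : A} (ha : a ∈ 𝒮 i) (b : B) (g : ι) :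
    (decompose ℬ (a • b) g : B) = a • (decompose ℬ b (-i + g) : B) := by
  induction b using DirectSum.Decomposition.inductionOn ℬ with
  | zero => simp
  | @homogeneous j b =>
    have hab : a • (b : B) ∈ ℬ (i + j) := SetLike.GradedSMul.smul_mem ha b.2
    by_cases hg : g = i + j
    · subst hg
      rw [decompose_of_mem_same ℬ hab, neg_add_cancel_left, decompose_of_mem_same ℬ b.2]
    · have hj : j ≠ -i + g := by rintro rfl; exact hg (add_neg_cancel_left i g).symm
      rw [decompose_of_mem_ne ℬ hab (Ne.symm hg), decompose_of_mem_ne ℬ b.2 hj, smul_zero]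
  | add b b' hb hb' =>
    simp only [smul_add, decompose_add, DirectSum.add_apply, AddMemClass.coe_add, hb, hb']

theorem IsGradedSubmodule.pointwise_smul_of_mem {σ : Type*} [SetLike σ R] {𝒮 : G → σ}
    [SetLike.GradedSMul 𝒮 ℳ] {N : Submodule R M} (hN : IsGradedSubmodule ℳ N)
    {i : G} {a : R} (ha : a ∈ 𝒮 i) : IsGradedSubmodule ℳ (a • N) := by
  intro g _ h
  obtain ⟨m, hm, rfl⟩ := Set.mem_smul_set.mp h
  rw [decompose_smul_of_mem ℳ ha]
  exact Submodule.smul_mem_pointwise_smul _ _ _ (hN _ _ hm)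

theorem mem_gradRad_iff_of_mem {P : Ideal R} {i : G} {x : R} (hx : x ∈ 𝒜 i) :
    x ∈ gradRad 𝒜 P ↔ ∃ n : ℕ, 0 < n ∧ x ^ n ∈ P := by
  refine ⟨fun h ↦ by simpa [decompose_of_mem_same 𝒜 hx] using h i, fun h g ↦ ?_⟩
  by_cases hg : g = i
  · rwa [hg, decompose_of_mem_same 𝒜 hx]
  · exact ⟨1, one_pos, by simp [decompose_of_mem_ne 𝒜 hx (Ne.symm hg)]⟩

theorem mem_gradRad_colon_iff_of_mem {K N : Submodule R M} {i : G} {x : R} (hx : x ∈ 𝒜 i) :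
    x ∈ gradRad 𝒜 (K.colon N) ↔ ∃ n : ℕ, 0 < n ∧ x ^ n • N ≤ K := by
  simp only [mem_gradRad_iff_of_mem 𝒜 hx, Submodule.mem_colon_iff_le]

theorem stmt_6 (N : Submodule R M) (hN0 : N ≠ ⊥) (hNg : IsGradedSubmodule ℳ N) :
    IsGr2AbsCoprimary 𝒜 ℳ N ↔
      ∀ x y : R, (∃ g, x ∈ 𝒜 g) → (∃ g, y ∈ 𝒜 g) →
        (∃ n : ℕ, 0 < n ∧ x ^ n • N ≤ (x * y) • N) ∨
        (∃ m : ℕ, 0 < m ∧ y ^ m • N ≤ (x * y) • N) ∨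
        x * y ∈ N.annihilator := by
  constructor
  · rintro ⟨-, -, habsorb⟩ x y ⟨gx, hx⟩ ⟨gy, hy⟩
    have hxyN : IsGradedSubmodule ℳ ((x * y) • N) :=
      hNg.pointwise_smul_of_mem ℳ (SetLike.mul_mem_graded hx hy)
    simpa only [mem_gradRad_colon_iff_of_mem 𝒜 hx, mem_gradRad_colon_iff_of_mem 𝒜 hy] using
      habsorb x y ⟨gx, hx⟩ ⟨gy, hy⟩ _ hxyN fun m ↦ Submodule.smul_mem_pointwise_smul m _ N
  · refine fun hcond ↦ ⟨hN0, hNg, fun x y ⟨gx, hx⟩ ⟨gy, hy⟩ K _ hK ↦ ?_⟩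
    have hxyK : (x * y) • N ≤ K := Submodule.mem_colon_iff_le.mp (Submodule.mem_colon.mpr hK)
    rw [mem_gradRad_colon_iff_of_mem 𝒜 hx, mem_gradRad_colon_iff_of_mem 𝒜 hy]
    rcases hcond x y ⟨gx, hx⟩ ⟨gy, hy⟩ with ⟨n, hn, hxn⟩ | ⟨n, hn, hyn⟩ | hann
    · exact Or.inl ⟨n, hn, hxn.trans hxyK⟩
    · exact Or.inr (Or.inl ⟨n, hn, hyn.trans hxyK⟩)
    · exact Or.inr (Or.inr hann)
end

section
/- Let M be a G-graded R-module, g ∈ G, I a graded ideal of R, and N a g-2-absorbing coprimary R-submodule of M. If x ∈ R_g and K is a graded R-submodule of M such that IxN ⊆ K, then x ∈ Grad((K :_R N)) or I_g ⊆ Grad((K :_R N)) or I_g x ⊆ Ann_R(N). -/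
open DirectSum Pointwise

variable {G : Type} [AddGroup G] [DecidableEq G]
variable {R : Type} [CommRing R] (𝒜 : G → AddSubgroup R) [GradedRing 𝒜]
variable {M : Type} [AddCommGroup M] [Module R M] (ℳ : G → AddSubgroup M)
  [SetLike.GradedSMul 𝒜 ℳ] [DirectSum.Decomposition ℳ]

/-- `g`-2-absorbing coprimary submodule: the absorbing condition for degree-`g`
homogeneous elements. -/
def IsG2AbsCoprimaryAt (g : G) (N : Submodule R M) : Prop :=
  N ≠ ⊥ ∧ IsGradedSubmodule ℳ N ∧
  ∀ x y : R, x ∈ 𝒜 g → y ∈ 𝒜 g →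
    ∀ K : Submodule R M, IsGradedSubmodule ℳ K →
      (∀ m ∈ N, (x * y) • m ∈ K) →
      x ∈ gradRad 𝒜 (K.colon N) ∨ y ∈ gradRad 𝒜 (K.colon N) ∨ x * y ∈ N.annihilator

lemma homog_mem_gradRad {g : G} {a : R} (ha : a ∈ 𝒜 g) {P : Ideal R}
    (h : ∃ n : ℕ, 0 < n ∧ a ^ n ∈ P) : a ∈ gradRad 𝒜 P := by
  intro h'
  by_cases hh : h' = g
  · subst hh
    rwa [DirectSum.decompose_of_mem_same 𝒜 ha]
  · refine ⟨1, one_pos, ?_⟩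
    rw [DirectSum.decompose_of_mem_ne 𝒜 ha (fun e => hh e.symm)]
    simpa using P.zero_mem

lemma homog_gradRad_pow {g : G} {a : R} (ha : a ∈ 𝒜 g) {P : Ideal R}
    (h : a ∈ gradRad 𝒜 P) : ∃ n : ℕ, 0 < n ∧ a ^ n ∈ P := by
  have := h g
  rwa [DirectSum.decompose_of_mem_same 𝒜 ha] at this

theorem stmt_8 (g : G) (I : Ideal R)
    (hI : ∀ (h : G) (r : R), r ∈ I → (DirectSum.decompose 𝒜 r h : R) ∈ I)
    (N : Submodule R M) (hN : IsG2AbsCoprimaryAt 𝒜 ℳ g N)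
    (x : R) (hx : x ∈ 𝒜 g) (K : Submodule R M) (hK : IsGradedSubmodule ℳ K)
    (hIxN : ∀ a ∈ I, ∀ m ∈ N, (a * x) • m ∈ K) :
    x ∈ gradRad 𝒜 (K.colon N) ∨
    (∀ a ∈ I, a ∈ 𝒜 g → a ∈ gradRad 𝒜 (K.colon N)) ∨
    (∀ a ∈ I, a ∈ 𝒜 g → a * x ∈ N.annihilator) := by
  classical
  by_cases hxg : x ∈ gradRad 𝒜 (K.colon N)
  · exact Or.inl hxg
  by_cases hmid : ∀ a ∈ I, a ∈ 𝒜 g → a ∈ gradRad 𝒜 (K.colon N)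
  · exact Or.inr (Or.inl hmid)
  push_neg at hmid
  obtain ⟨a₀, ha₀I, ha₀g, ha₀r⟩ := hmid
  have ha₀x : a₀ * x ∈ N.annihilator := by
    rcases hN.2.2 a₀ x ha₀g hx K hK (fun m hm => hIxN a₀ ha₀I m hm) with h | h | h
    · exact absurd h ha₀r
    · exact absurd h hxg
    · exact h
  refine Or.inr (Or.inr (fun a haI hag => ?_))
  rcases hN.2.2 a x hag hx K hK (fun m hm => hIxN a haI m hm) with h | h | h
  · -- a ∈ gradRad; consider a + a₀
    rcases hN.2.2 (a + a₀) x (AddSubgroup.add_mem _ hag ha₀g) hx K hK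
      (fun m hm => hIxN _ (I.add_mem haI ha₀I) m hm) with h2 | h2 | h2
    · exfalso
      apply ha₀r
      have hrad1 : a ∈ (K.colon N).radical := by
        obtain ⟨n, _, hn⟩ := homog_gradRad_pow 𝒜 hag h; exact ⟨n, hn⟩
      have hrad2 : a + a₀ ∈ (K.colon N).radical := by
        obtain ⟨n, _, hn⟩ := homog_gradRad_pow 𝒜 (AddSubgroup.add_mem _ hag ha₀g) h2
        exact ⟨n, hn⟩
      have hrad : a₀ ∈ (K.colon N).radical := by
        have := Ideal.sub_mem _ hrad2 hrad1
        simpa using this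
      obtain ⟨n, hn⟩ := hrad
      apply homog_mem_gradRad 𝒜 ha₀g
      rcases n with _ | n
      · refine ⟨1, one_pos, ?_⟩
        rw [pow_zero] at hn
        simpa using (K.colon N).mul_mem_left a₀ hn
      · exact ⟨n + 1, Nat.succ_pos n, hn⟩
    · exact absurd h2 hxg
    · have := Submodule.sub_mem _ h2 ha₀x
      have heq : (a + a₀) * x - a₀ * x = a * x := by ring
      rwa [heq] at this
  · exact absurd h hxg
  · exact h
end

section
/- Let M be a G-graded R-module, g ∈ G, I and J graded ideals of R, and N a g-2-absorbing coprimary R-submodule of M. If K is a graded R-submodule of M such that IJN ⊆ K, then I_g ⊆ Grad((K :_R N)) or J_g ⊆ Grad((K :_R N)) or I_g J_g ⊆ Ann_R(N). -/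
open DirectSum Pointwise

variable {G : Type} [AddGroup G] [DecidableEq G]
variable {R : Type} [CommRing R] (𝒜 : G → AddSubgroup R) [GradedRing 𝒜]
variable {M : Type} [AddCommGroup M] [Module R M] (ℳ : G → AddSubgroup M)
  [SetLike.GradedSMul 𝒜 ℳ] [DirectSum.Decomposition ℳ]

lemma mem_gradRad_iff {g : G} (P : Ideal R) {x : R} (hx : x ∈ 𝒜 g) :
    x ∈ gradRad 𝒜 P ↔ x ∈ P.radical := by
  constructor
  · intro h
    obtain ⟨n, _, hp⟩ := h g
    rw [DirectSum.decompose_of_mem_same 𝒜 hx] at hp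
    exact ⟨n, hp⟩
  · rintro ⟨n, hn⟩ h
    by_cases hh : h = g
    · subst hh
      rw [DirectSum.decompose_of_mem_same 𝒜 hx]
      exact ⟨n + 1, Nat.succ_pos n, by rw [pow_succ]; exact Ideal.mul_mem_right x P hn⟩
    · rw [DirectSum.decompose_of_mem_ne 𝒜 hx (Ne.symm hh)]
      exact ⟨1, one_pos, by simpa using P.zero_mem⟩

theorem stmt_9 (g : G) (I J : Ideal R)
    (hI : ∀ (h : G) (r : R), r ∈ I → (DirectSum.decompose 𝒜 r h : R) ∈ I)
    (hJ : ∀ (h : G) (r : R), r ∈ J → (DirectSum.decompose 𝒜 r h : R) ∈ J)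
    (N : Submodule R M) (hN : IsG2AbsCoprimaryAt 𝒜 ℳ g N)
    (K : Submodule R M) (hK : IsGradedSubmodule ℳ K)
    (hIJN : ∀ a ∈ I, ∀ b ∈ J, ∀ m ∈ N, (a * b) • m ∈ K) :
    (∀ a ∈ I, a ∈ 𝒜 g → a ∈ gradRad 𝒜 (K.colon N)) ∨
    (∀ b ∈ J, b ∈ 𝒜 g → b ∈ gradRad 𝒜 (K.colon N)) ∨
    (∀ a ∈ I, a ∈ 𝒜 g → ∀ b ∈ J, b ∈ 𝒜 g → a * b ∈ N.annihilator) := by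
  obtain ⟨hN0, hNg, habs⟩ := hN
  by_cases hIcase : ∀ a ∈ I, a ∈ 𝒜 g → a ∈ gradRad 𝒜 (K.colon N)
  · exact Or.inl hIcase
  by_cases hJcase : ∀ b ∈ J, b ∈ 𝒜 g → b ∈ gradRad 𝒜 (K.colon N)
  · exact Or.inr (Or.inl hJcase)
  right; right
  push_neg at hIcase hJcase
  obtain ⟨a0, ha0I, ha0g, ha0r⟩ := hIcase
  obtain ⟨b0, hb0J, hb0g, hb0r⟩ := hJcase
  rw [mem_gradRad_iff 𝒜 _ ha0g] at ha0r
  rw [mem_gradRad_iff 𝒜 _ hb0g] at hb0r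
  have key : ∀ a ∈ I, a ∈ 𝒜 g → ∀ b ∈ J, b ∈ 𝒜 g →
      a ∉ (K.colon N).radical → b ∉ (K.colon N).radical → a * b ∈ N.annihilator := by
    intro a haI hag b hbJ hbg har hbr
    rcases habs a b hag hbg K hK (hIJN a haI b hbJ) with h | h | h
    · exact absurd ((mem_gradRad_iff 𝒜 _ hag).mp h) har
    · exact absurd ((mem_gradRad_iff 𝒜 _ hbg).mp h) hbr
    · exact h
  intro a haI hag b hbJ hbg
  have haa0I : a + a0 ∈ I := I.add_mem haI ha0I
  have haa0g : a + a0 ∈ 𝒜 g := (𝒜 g).add_mem hag ha0g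
  have hbb0J : b + b0 ∈ J := J.add_mem hbJ hb0J
  have hbb0g : b + b0 ∈ 𝒜 g := (𝒜 g).add_mem hbg hb0g
  by_cases har : a ∈ (K.colon N).radical <;>
    by_cases hbr : b ∈ (K.colon N).radical
  · -- both in radical
    have haa0r : a + a0 ∉ (K.colon N).radical := fun h =>
      ha0r (by simpa using Ideal.sub_mem _ h har)
    have hbb0r : b + b0 ∉ (K.colon N).radical := fun h =>
      hb0r (by simpa using Ideal.sub_mem _ h hbr)
    have h1 := key _ haa0I haa0g _ hbb0J hbb0g haa0r hbb0r
    have h2 := key _ ha0I ha0g _ hbb0J hbb0g ha0r hbb0r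
    have h3 := key _ haa0I haa0g _ hb0J hb0g haa0r hb0r
    have h4 := key _ ha0I ha0g _ hb0J hb0g ha0r hb0r
    have heq : a * b = (a + a0) * (b + b0) - a0 * (b + b0) - (a + a0) * b0 + a0 * b0 := by
      ring
    rw [heq]
    exact add_mem (sub_mem (sub_mem h1 h2) h3) h4
  · have haa0r : a + a0 ∉ (K.colon N).radical := fun h =>
      ha0r (by simpa using Ideal.sub_mem _ h har)
    have h1 := key _ haa0I haa0g _ hbJ hbg haa0r hbr
    have h2 := key _ ha0I ha0g _ hbJ hbg ha0r hbr
    have heq : a * b = (a + a0) * b - a0 * b := by ring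
    rw [heq]
    exact sub_mem h1 h2
  · have hbb0r : b + b0 ∉ (K.colon N).radical := fun h =>
      hb0r (by simpa using Ideal.sub_mem _ h hbr)
    have h1 := key _ haI hag _ hbb0J hbb0g har hbb0r
    have h2 := key _ haI hag _ hb0J hb0g har hb0r
    have heq : a * b = a * (b + b0) - a * b0 := by ring
    rw [heq]
    exact sub_mem h1 h2
  · exact key _ haI hag _ hbJ hbg har hbr
end

section
/- Every graded strongly 2-absorbing second submodule of a graded R-module M is a graded 2-absorbing coprimary submodule of M. -/
open DirectSum Pointwise

variable {G : Type} [AddGroup G] [DecidableEq G]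
variable {R : Type} [CommRing R] (𝒜 : G → AddSubgroup R) [GradedRing 𝒜]
variable {M : Type} [AddCommGroup M] [Module R M] (ℳ : G → AddSubgroup M)
  [SetLike.GradedSMul 𝒜 ℳ] [DirectSum.Decomposition ℳ]

/-- Graded strongly 2-absorbing second submodule. -/
def IsGrStrongly2AbsSecond (N : Submodule R M) : Prop :=
  N ≠ ⊥ ∧ IsGradedSubmodule ℳ N ∧
  ∀ x y : R, (∃ g, x ∈ 𝒜 g) → (∃ g, y ∈ 𝒜 g) →
    ∀ K : Submodule R M, IsGradedSubmodule ℳ K →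
      (∀ m ∈ N, (x * y) • m ∈ K) →
      (∀ m ∈ N, x • m ∈ K) ∨ (∀ m ∈ N, y • m ∈ K) ∨ x * y ∈ N.annihilator

theorem stmt_11 (N : Submodule R M) (hN : IsGrStrongly2AbsSecond 𝒜 ℳ N) :
    IsGr2AbsCoprimary 𝒜 ℳ N := by
  obtain ⟨hne, hgr, h⟩ := hN
  refine ⟨hne, hgr, ?_⟩
  intro x y hx hy K hK hxy
  have key : ∀ z : R, (∃ g, z ∈ 𝒜 g) → (∀ m ∈ N, z • m ∈ K) →
      z ∈ gradRad 𝒜 (K.colon N) := by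
    intro z ⟨g₀, hg₀⟩ hz g
    refine ⟨1, one_pos, ?_⟩
    rw [pow_one]
    by_cases hgg : g = g₀
    · subst hgg
      rw [DirectSum.decompose_of_mem_same 𝒜 hg₀]
      exact Submodule.mem_colon.mpr hz
    · rw [DirectSum.decompose_of_mem_ne 𝒜 hg₀ (Ne.symm hgg)]
      exact (K.colon N).zero_mem
  rcases h x y hx hy K hK hxy with h1 | h2 | h3
  · exact Or.inl (key x hx h1)
  · exact Or.inr (Or.inl (key y hy h2))
  · exact Or.inr (Or.inr h3)
end

section
/- Let R = R₁ × R₂ be a product of G-graded rings and M = M₁ × M₂. If N₁ is a graded R₁-submodule of M₁ with Ann_{R₁}(N₁) a graded primary ideal of R₁, and N₂ is a graded R₂-submodule of M₂ with Ann_{R₂}(N₂) a graded primary ideal of R₂, then Ann_R(N₁ × N₂) is a graded 2-absorbing primary ideal of R. -/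
open DirectSum Pointwise

variable {G : Type} [AddGroup G] [DecidableEq G]
variable {R : Type} [CommRing R] (𝒜 : G → AddSubgroup R) [GradedRing 𝒜]
variable {M : Type} [AddCommGroup M] [Module R M] (ℳ : G → AddSubgroup M)
  [SetLike.GradedSMul 𝒜 ℳ] [DirectSum.Decomposition ℳ]

/-- Graded primary ideal. -/
def IsGrPrimaryIdeal (P : Ideal R) : Prop :=
  P ≠ ⊤ ∧ (∀ (g : G) (r : R), r ∈ P → (DirectSum.decompose 𝒜 r g : R) ∈ P) ∧
  ∀ a b : R, (∃ g, a ∈ 𝒜 g) → (∃ g, b ∈ 𝒜 g) →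
    a * b ∈ P → a ∈ P ∨ b ∈ gradRad 𝒜 P

variable {R₁ R₂ : Type} [CommRing R₁] [CommRing R₂]
  (𝒜₁ : G → AddSubgroup R₁) [GradedRing 𝒜₁]
  (𝒜₂ : G → AddSubgroup R₂) [GradedRing 𝒜₂]
  {M₁ M₂ : Type} [AddCommGroup M₁] [AddCommGroup M₂]
  [Module R₁ M₁] [Module R₂ M₂]
  (ℳ₁ : G → AddSubgroup M₁) [SetLike.GradedSMul 𝒜₁ ℳ₁] [DirectSum.Decomposition ℳ₁]
  (ℳ₂ : G → AddSubgroup M₂) [SetLike.GradedSMul 𝒜₂ ℳ₂] [DirectSum.Decomposition ℳ₂]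
  [GradedRing (fun g => (𝒜₁ g).prod (𝒜₂ g))]
  [Module (R₁ × R₂) (M₁ × M₂)]
  [SetLike.GradedSMul (fun g => (𝒜₁ g).prod (𝒜₂ g)) (fun g => (ℳ₁ g).prod (ℳ₂ g))]
  [DirectSum.Decomposition (fun g => (ℳ₁ g).prod (ℳ₂ g))]

/-!
For homogeneous `a, b, c` with `abc ∈ P` and `P` graded primary, either `ab ∈ P` or `c ∈ √P`
(so both `ac, bc ∈ √P`), and in either case at least one of `ac, bc` lies in `√P`. On homogeneous
elements the graded radical is the ordinary radical, and the annihilator of `N₁ × N₂` as well as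
its radical split as products of ideals. The 2-absorbing condition is then checked coordinatewise:
if `ab ∉ P₁ × P₂`, some coordinate has both `ac` and `bc` in its radical, and the other coordinate
supplies one of them.
-/

section Homogeneous

variable {P : Ideal R} {x : R} {i : G}

theorem mem_gradRad_iff_mem_radical (hx : x ∈ 𝒜 i) : x ∈ gradRad 𝒜 P ↔ x ∈ P.radical := by
  constructor
  · intro h
    obtain ⟨n, -, hn⟩ := h i
    rw [decompose_of_mem_same 𝒜 hx] at hn
    exact ⟨n, hn⟩
  · rintro ⟨n, hn⟩ g
    by_cases hig : i = g
    · subst hig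
      refine ⟨n + 1, n.succ_pos, ?_⟩
      rw [decompose_of_mem_same 𝒜 hx, pow_succ]
      exact P.mul_mem_right x hn
    · rw [decompose_of_mem_ne 𝒜 hx hig]
      exact ⟨1, one_pos, by simp⟩

end Homogeneous

namespace IsGrPrimaryIdeal

variable {𝒜} {P : Ideal R} {a b c : R} {i j k : G}

theorem mem_or_mem_radical_of_mul_mem (hP : IsGrPrimaryIdeal 𝒜 P)
    (ha : a ∈ 𝒜 i) (hb : b ∈ 𝒜 j) (hab : a * b ∈ P) :
    a ∈ P ∨ b ∈ P.radical :=
  (hP.2.2 a b ⟨i, ha⟩ ⟨j, hb⟩ hab).imp_right (mem_gradRad_iff_mem_radical 𝒜 hb).1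

theorem mul_mem_or_mul_mem_radical (hP : IsGrPrimaryIdeal 𝒜 P)
    (ha : a ∈ 𝒜 i) (hb : b ∈ 𝒜 j) (hc : c ∈ 𝒜 k)
    (habc : a * b * c ∈ P) : a * b ∈ P ∨ (a * c ∈ P.radical ∧ b * c ∈ P.radical) :=
  (hP.mem_or_mem_radical_of_mul_mem (SetLike.mul_mem_graded ha hb) hc habc).imp_right
    fun hc' ↦ ⟨P.radical.mul_mem_left a hc', P.radical.mul_mem_left b hc'⟩

theorem mul_mem_radical_or_mul_mem_radical (hP : IsGrPrimaryIdeal 𝒜 P)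
    (ha : a ∈ 𝒜 i) (hb : b ∈ 𝒜 j) (hc : c ∈ 𝒜 k)
    (habc : a * b * c ∈ P) : a * c ∈ P.radical ∨ b * c ∈ P.radical := by
  rcases hP.mul_mem_or_mul_mem_radical ha hb hc habc with hab | hrad
  · rcases hP.mem_or_mem_radical_of_mul_mem ha hb hab with ha' | hb'
    · exact Or.inl (P.radical.mul_mem_right c (P.le_radical ha'))
    · exact Or.inr (P.radical.mul_mem_right c hb')
  · exact Or.inl hrad.1

end IsGrPrimaryIdeal

theorem Ideal.radical_prod {S T : Type*} [CommSemiring S] [CommSemiring T] (I : Ideal S)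
    (J : Ideal T) : (I.prod J).radical = I.radical.prod J.radical := by
  simp only [Ideal.prod, Ideal.radical_inf, Ideal.comap_radical]

theorem DirectSum.decompose_prod_apply {ι A₁ A₂ : Type*} [DecidableEq ι] [AddCommGroup A₁]
    [AddCommGroup A₂] (𝒜₁ : ι → AddSubgroup A₁) (𝒜₂ : ι → AddSubgroup A₂)
    [Decomposition 𝒜₁] [Decomposition 𝒜₂] [Decomposition (fun i ↦ (𝒜₁ i).prod (𝒜₂ i))]
    (x : A₁ × A₂) (i : ι) :
    (decompose (fun i ↦ (𝒜₁ i).prod (𝒜₂ i)) x i : A₁ × A₂) =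
      ((decompose 𝒜₁ x.1 i : A₁), (decompose 𝒜₂ x.2 i : A₂)) := by
  induction x using Decomposition.inductionOn (fun i ↦ (𝒜₁ i).prod (𝒜₂ i)) with
  | zero => simp only [decompose_zero, zero_apply, ZeroMemClass.coe_zero, Prod.fst_zero,
      Prod.snd_zero, Prod.mk_zero_zero]
  | @homogeneous j x =>
    have hx : (x : A₁ × A₂) ∈ (𝒜₁ j).prod (𝒜₂ j) := x.2
    obtain ⟨hx₁, hx₂⟩ := AddSubgroup.mem_prod.1 hx
    by_cases hji : j = i
    · subst hji
      rw [decompose_of_mem_same (fun i ↦ (𝒜₁ i).prod (𝒜₂ i)) hx,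
        decompose_of_mem_same 𝒜₁ hx₁, decompose_of_mem_same 𝒜₂ hx₂]
    · rw [decompose_of_mem_ne (fun i ↦ (𝒜₁ i).prod (𝒜₂ i)) hx hji,
        decompose_of_mem_ne 𝒜₁ hx₁ hji, decompose_of_mem_ne 𝒜₂ hx₂ hji, Prod.mk_zero_zero]
  | add x y hx hy => simp only [decompose_add, add_apply, AddSubgroup.coe_add, hx, hy,
      Prod.fst_add, Prod.snd_add, Prod.mk_add_mk]

theorem Submodule.annihilator_eq_prod {S₁ S₂ E₁ E₂ : Type*} [CommSemiring S₁] [CommSemiring S₂]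
    [AddCommMonoid E₁] [AddCommMonoid E₂] [Module S₁ E₁] [Module S₂ E₂]
    [Module (S₁ × S₂) (E₁ × E₂)]
    (hsmul : ∀ (r : S₁ × S₂) (m : E₁ × E₂), r • m = (r.1 • m.1, r.2 • m.2))
    {N₁ : Submodule S₁ E₁} {N₂ : Submodule S₂ E₂} {N : Submodule (S₁ × S₂) (E₁ × E₂)}
    (hN : (N : Set (E₁ × E₂)) = (N₁ : Set E₁) ×ˢ (N₂ : Set E₂)) :
    N.annihilator = N₁.annihilator.prod N₂.annihilator := by
  have hmem (m : E₁ × E₂) : m ∈ N ↔ m.1 ∈ N₁ ∧ m.2 ∈ N₂ := by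
    rw [← SetLike.mem_coe, hN, Set.mem_prod, SetLike.mem_coe, SetLike.mem_coe]
  ext r
  simp only [Ideal.mem_prod, Submodule.mem_annihilator, Prod.forall, hmem, hsmul,
    Prod.mk_eq_zero]
  constructor
  · intro h
    exact ⟨fun m₁ hm₁ ↦ (h m₁ 0 ⟨hm₁, N₂.zero_mem⟩).1,
      fun m₂ hm₂ ↦ (h 0 m₂ ⟨N₁.zero_mem, hm₂⟩).2⟩
  · rintro ⟨h₁, h₂⟩ m₁ m₂ ⟨hm₁, hm₂⟩
    exact ⟨h₁ m₁ hm₁, h₂ m₂ hm₂⟩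

theorem IsGrPrimaryIdeal.prod {P₁ : Ideal R₁} {P₂ : Ideal R₂} (hP₁ : IsGrPrimaryIdeal 𝒜₁ P₁)
    (hP₂ : IsGrPrimaryIdeal 𝒜₂ P₂) :
    IsGr2AbsPrimaryIdeal (fun g => (𝒜₁ g).prod (𝒜₂ g)) (P₁.prod P₂) := by
  refine ⟨fun h ↦ hP₁.1 (Ideal.prod_eq_top_iff.1 h).1, fun g r hr ↦ ?_, ?_⟩
  · rw [Ideal.mem_prod] at hr ⊢
    rw [DirectSum.decompose_prod_apply]
    exact ⟨hP₁.2.1 g _ hr.1, hP₂.2.1 g _ hr.2⟩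
  · rintro a b c ⟨i, ha⟩ ⟨j, hb⟩ ⟨k, hc⟩ habc
    let 𝒜₁₂ := fun g => (𝒜₁ g).prod (𝒜₂ g)
    rw [mem_gradRad_iff_mem_radical 𝒜₁₂ (SetLike.mul_mem_graded (A := 𝒜₁₂) ha hc),
      mem_gradRad_iff_mem_radical 𝒜₁₂ (SetLike.mul_mem_graded (A := 𝒜₁₂) hb hc),
      Ideal.radical_prod]
    simp only [Ideal.mem_prod, Prod.fst_mul, Prod.snd_mul] at habc ⊢
    rw [AddSubgroup.mem_prod] at ha hb hc
    have := hP₁.mul_mem_or_mul_mem_radical ha.1 hb.1 hc.1 habc.1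
    have := hP₂.mul_mem_or_mul_mem_radical ha.2 hb.2 hc.2 habc.2
    have := hP₁.mul_mem_radical_or_mul_mem_radical ha.1 hb.1 hc.1 habc.1
    have := hP₂.mul_mem_radical_or_mul_mem_radical ha.2 hb.2 hc.2 habc.2
    tauto

theorem stmt_13
    (hsmul : ∀ (r : R₁ × R₂) (m : M₁ × M₂), r • m = (r.1 • m.1, r.2 • m.2))
    (N₁ : Submodule R₁ M₁)
    (hP₁ : IsGrPrimaryIdeal 𝒜₁ N₁.annihilator)
    (N₂ : Submodule R₂ M₂)
    (hP₂ : IsGrPrimaryIdeal 𝒜₂ N₂.annihilator)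
    (N : Submodule (R₁ × R₂) (M₁ × M₂))
    (hNset : (N : Set (M₁ × M₂)) = (N₁ : Set M₁) ×ˢ (N₂ : Set M₂)) :
    IsGr2AbsPrimaryIdeal (fun g => (𝒜₁ g).prod (𝒜₂ g)) N.annihilator := by
  rw [Submodule.annihilator_eq_prod hsmul hNset]
  exact IsGrPrimaryIdeal.prod 𝒜₁ 𝒜₂ hP₁ hP₂
end
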